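/- arXiv:2602.24268 — 2 statements merged into one kernel-verified Lean document; each statement's English description precedes it below -/
import Mathlib

section
/- Let m, g, J₁, J₂, J₃, ρ > 0 and R ∈ SO(3) with bᵢ = R eᵢ, and suppose e₃ᵀ R e₃ = 0. Then the nonzero vector (Ω, v) = (e₂, −ρ b₃) ∈ ℝ³ × ℝ³ lies in the span of the control directions a_f = (0, (1/m) R e₃), a_{τ₂} = ((1/J₂) e₂, 0), a_{τ₃} = ((1/J₃) e₃, 0) (indeed (e₂, −ρ b₃) = J₂ a_{τ₂} − ρ m a_f), and it simultaneously annihilates all three constraint covectors: e₃ ⋅ v = 0, e₃ ⋅ Ω − (1/ρ)(b₂ ⋅ v) = 0, and e₂ ⋅ Ω + (1/ρ)(b₃ ⋅ v) = 0. Hence the transversality condition fails when e₃ᵀ R e₃ = 0. -/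
/-! The body axes `bᵢ = R eᵢ` are orthonormal since `RᵀR = I`, so `b₂ ⋅ b₃ = 0` and
`b₃ ⋅ b₃ = 1`; together with `e₃ ⋅ b₃ = 0` each constraint evaluates to zero on `(e₂, −ρ b₃)`. -/

open Matrix

/-- Standard basis vectors of `ℝ³ = Fin 3 → ℝ` (so `e 0 = e₁`, `e 1 = e₂`, `e 2 = e₃`). -/
def e (i : Fin 3) : Fin 3 → ℝ := Pi.single i 1

/-- `SO(3)`: real 3×3 matrices with `RᵀR = I` and `det R = 1`. -/
def SO3 (R : Matrix (Fin 3) (Fin 3) ℝ) : Prop := Rᵀ * R = 1 ∧ R.det = 1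

theorem Matrix.mulVec_dotProduct_mulVec_of_transpose_mul_self {n α : Type*} [Fintype n]
    [DecidableEq n] [CommSemiring α] {R : Matrix n n α} (hR : Rᵀ * R = 1) (x y : n → α) :
    (R *ᵥ x) ⬝ᵥ (R *ᵥ y) = x ⬝ᵥ y := by
  rw [dotProduct_mulVec, ← vecMul_transpose, vecMul_vecMul, hR, vecMul_one]

theorem e_dotProduct_e (i j : Fin 3) : e i ⬝ᵥ e j = if i = j then 1 else 0 := by
  simp [e, Pi.single_apply, eq_comm]

theorem SO3.mulVec_e_dotProduct_mulVec_e {R : Matrix (Fin 3) (Fin 3) ℝ} (hR : SO3 R)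
    (i j : Fin 3) : (R *ᵥ e i) ⬝ᵥ (R *ᵥ e j) = if i = j then 1 else 0 := by
  rw [mulVec_dotProduct_mulVec_of_transpose_mul_self hR.1, e_dotProduct_e]

theorem transversality_fails_general (m J₂ ρ : ℝ)
    (hm : 0 < m) (hJ₂ : 0 < J₂) (hρ : 0 < ρ)
    (R : Matrix (Fin 3) (Fin 3) ℝ) (hR : SO3 R)
    (hs : e 2 ⬝ᵥ (R *ᵥ e 2) = 0) :
    let Ω : Fin 3 → ℝ := e 1
    let v : Fin 3 → ℝ := -(ρ • (R *ᵥ e 2))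
    ((Ω, v) ≠ (0, 0)) ∧
    (Ω, v) = J₂ • (((1 / J₂) • e 1, (0 : Fin 3 → ℝ)) : (Fin 3 → ℝ) × (Fin 3 → ℝ)) -
        (ρ * m) • ((((0 : Fin 3 → ℝ)), (1 / m) • (R *ᵥ e 2)) : (Fin 3 → ℝ) × (Fin 3 → ℝ)) ∧
    e 2 ⬝ᵥ v = 0 ∧
    e 2 ⬝ᵥ Ω - (1 / ρ) * ((R *ᵥ e 1) ⬝ᵥ v) = 0 ∧
    e 1 ⬝ᵥ Ω + (1 / ρ) * ((R *ᵥ e 2) ⬝ᵥ v) = 0 := by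
  intro Ω v
  have hb := hR.mulVec_e_dotProduct_mulVec_e
  refine ⟨?_, ?_, ?_, ?_, ?_⟩
  · intro h
    simpa [Ω, e] using congrFun (congrArg Prod.fst h) 1
  · ext : 1 <;> simp [Ω, v, smul_smul, hJ₂.ne', hm.ne']
  · simp [v, hs]
  · simp [Ω, v, hb, e_dotProduct_e]
  · simp [Ω, v, hb, e_dotProduct_e, hρ.ne']

/-- When `e₃ᵀ R e₃ = 0`, the nonzero velocity `(Ω, v) = (e₂, −ρ b₃)` lies in the span of
the control directions (indeed `(e₂, −ρ b₃) = J₂ a_{τ₂} − ρ m a_f`) and annihilates all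
three constraint covectors `μ¹, μ², μ³`; hence transversality fails. -/
theorem transversality_fails (m g J₁ J₂ J₃ ρ : ℝ)
    (hm : 0 < m) (hg : 0 < g) (hJ₁ : 0 < J₁) (hJ₂ : 0 < J₂) (hJ₃ : 0 < J₃) (hρ : 0 < ρ)
    (R : Matrix (Fin 3) (Fin 3) ℝ) (hR : SO3 R)
    (hs : e 2 ⬝ᵥ (R *ᵥ e 2) = 0) :
    let Ω : Fin 3 → ℝ := e 1
    let v : Fin 3 → ℝ := -(ρ • (R *ᵥ e 2))
    ((Ω, v) ≠ (0, 0)) ∧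
    (Ω, v) = J₂ • (((1 / J₂) • e 1, (0 : Fin 3 → ℝ)) : (Fin 3 → ℝ) × (Fin 3 → ℝ)) -
        (ρ * m) • ((((0 : Fin 3 → ℝ)), (1 / m) • (R *ᵥ e 2)) : (Fin 3 → ℝ) × (Fin 3 → ℝ)) ∧
    e 2 ⬝ᵥ v = 0 ∧
    e 2 ⬝ᵥ Ω - (1 / ρ) * ((R *ᵥ e 1) ⬝ᵥ v) = 0 ∧
    e 1 ⬝ᵥ Ω + (1 / ρ) * ((R *ᵥ e 2) ⬝ᵥ v) = 0 :=
  transversality_fails_general m J₂ ρ hm hJ₂ hρ R hR hs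
end

section
/- (Residual stabilization proposition.) Let m, g, J₁, J₂, J₃ > 0, J = diag(J₁,J₂,J₃), k₁, k₂, k₃ > 0, and let p, v, Ω : I → ℝ³, R : I → SO(3) be differentiable curves on an interval I containing 0 satisfying the closed-loop dynamics ṗ = v, m v̇ = f R e₃ − m g e₃, Ṙ = R Ω̂, J Ω̇ + Ω × (J Ω) = τ with τ₁ = 0 and the stabilizing feedback f = m (g − k₁ μ₁)/s₃, τ₂ = J₂[−k₃ μ₃ − ((J₃ − J₁)/J₂) Ω₃ Ω₁ − (Ω₂ v₁ − Ω₁ v₂ + f/m − g s₃)/ρ + v₃ (p̂ ⋅ v)/ρ²], τ₃ = J₃[−k₂ μ₂ − ((J₁ − J₂)/J₃) Ω₁ Ω₂ + (Ω₁ v₃ − Ω₃ v₁ − g s₂)/ρ − v₂ (p̂ ⋅ v)/ρ²], where the residuals are μ₁ = e₃ ⋅ v, μ₂ = Ω₃ − v₂/ρ, μ₃ = Ω₂ + v₃/ρ. Assume ρ(t) = ‖p(t)‖ > 0 and s₃(t) = e₃ ⋅ b₃(t) ≠ 0 for all t ∈ I. Then μ̇ᵢ(t) = −kᵢ μᵢ(t)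 for all t ∈ I, and consequently μᵢ(t) = μᵢ(0) e^{−kᵢ t} for all t ∈ I and i = 1, 2, 3. -/
open Matrix

/-- The Euclidean norm on `ℝ³ = Fin 3 → ℝ`. -/
noncomputable def enorm3 (x : Fin 3 → ℝ) : ℝ := Real.sqrt (x ⬝ᵥ x)

/-- The hat map: `hat Ω` is the skew-symmetric matrix with `(hat Ω) y = Ω × y`. -/
def hat (Ω : Fin 3 → ℝ) : Matrix (Fin 3) (Fin 3) ℝ :=
  !![0, -Ω 2, Ω 1; Ω 2, 0, -Ω 0; -Ω 1, Ω 0, 0]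

/-- Residual `μ₁ = e₃ ⋅ v` (altitude). -/
noncomputable def mu1 (v : ℝ → Fin 3 → ℝ) (s : ℝ) : ℝ := e 2 ⬝ᵥ v s

/-- Residual `μ₂ = Ω₃ − v₂/ρ` (pointing). -/
noncomputable def mu2 (R : ℝ → Matrix (Fin 3) (Fin 3) ℝ) (p v Ω : ℝ → Fin 3 → ℝ)
    (s : ℝ) : ℝ := e 2 ⬝ᵥ Ω s - ((R s *ᵥ e 1) ⬝ᵥ v s) / enorm3 (p s)

/-- Residual `μ₃ = Ω₂ + v₃/ρ` (pointing). -/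
noncomputable def mu3 (R : ℝ → Matrix (Fin 3) (Fin 3) ℝ) (p v Ω : ℝ → Fin 3 → ℝ)
    (s : ℝ) : ℝ := e 1 ⬝ᵥ Ω s + ((R s *ᵥ e 2) ⬝ᵥ v s) / enorm3 (p s)

attribute [local instance] Matrix.normedAddCommGroup Matrix.normedSpace

/-!
Each residual is differentiated along the flow using only kinematics: `ρ̇ = p̂ ⋅ v`,
`ḃᵢ = R (Ω × eᵢ)`, and `bᵢ ⋅ v̇ = (f/m)(bᵢ ⋅ b₃) − g (bᵢ ⋅ e₃)`, where orthonormality of the body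
axes gives `b₂ ⋅ b₃ = 0` and `b₃ ⋅ b₃ = 1`; Euler's equations supply `Ω̇₂` and `Ω̇₃`. The
feedback law cancels every term except `−kᵢ μᵢ`. Then `μᵢ(t) e^{kᵢ t}` has zero derivative on
the interval `I`, so it is constant there.
-/

theorem e_dotProduct (i : Fin 3) (x : Fin 3 → ℝ) : e i ⬝ᵥ x = x i :=
  single_one_dotProduct i x

theorem cross_e_one (Ω : Fin 3 → ℝ) : Ω ⨯₃ e 1 = Ω 0 • e 2 - Ω 2 • e 0 := by
  ext i
  fin_cases i <;> simp [e, cross_apply]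

theorem cross_e_two (Ω : Fin 3 → ℝ) : Ω ⨯₃ e 2 = Ω 1 • e 0 - Ω 0 • e 1 := by
  ext i
  fin_cases i <;> simp [e, cross_apply]

theorem hat_mulVec (Ω y : Fin 3 → ℝ) : hat Ω *ᵥ y = Ω ⨯₃ y := by
  ext i
  fin_cases i <;> simp [hat, cross_apply, mulVec, dotProduct, Fin.sum_univ_three] <;> ring

theorem diagonal_mulVec_add_cross_diagonal_mulVec (J₁ J₂ J₃ : ℝ) (α Ω : Fin 3 → ℝ) :
    diagonal ![J₁, J₂, J₃] *ᵥ α + Ω ⨯₃ (diagonal ![J₁, J₂, J₃] *ᵥ Ω) =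
      ![J₁ * α 0 + (J₃ - J₂) * Ω 1 * Ω 2, J₂ * α 1 + (J₁ - J₃) * Ω 2 * Ω 0,
        J₃ * α 2 + (J₂ - J₁) * Ω 0 * Ω 1] := by
  ext i
  fin_cases i <;> simp [cross_apply, mulVec_diagonal] <;> ring

theorem dotProduct_mulVec_mulVec_of_transpose_mul_self {n α : Type*} [Fintype n] [DecidableEq n]
    [CommSemiring α] {A : Matrix n n α} (hA : Aᵀ * A = 1) (x y : n → α) :
    (A *ᵥ x) ⬝ᵥ (A *ᵥ y) = x ⬝ᵥ y := by
  rw [dotProduct_mulVec, ← vecMul_transpose, vecMul_vecMul, hA, vecMul_one]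

theorem dotProduct_eq_of_smul_eq_sub {m g F : ℝ} {a b c : Fin 3 → ℝ} (hm : m ≠ 0)
    (h : m • a = F • b - (m * g) • c) (w : Fin 3 → ℝ) :
    w ⬝ᵥ a = F / m * (w ⬝ᵥ b) - g * (w ⬝ᵥ c) := by
  have ha : a = (F / m) • b - g • c := by
    rw [← inv_smul_smul₀ hm a, h]
    ext i
    simp only [Pi.smul_apply, Pi.sub_apply, smul_eq_mul]
    field_simp
  simp [ha, dotProduct_sub, dotProduct_smul]

section CurveCalculus

variable {t : ℝ}

theorem HasDerivAt.dotProduct {n : Type*} [Fintype n] {x y : ℝ → n → ℝ} {x' y' : n → ℝ}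
    (hx : HasDerivAt x x' t) (hy : HasDerivAt y y' t) :
    HasDerivAt (fun s => x s ⬝ᵥ y s) (x' ⬝ᵥ y t + x t ⬝ᵥ y') t := by
  have h := HasDerivAt.fun_sum (u := Finset.univ) fun i _ =>
    (hasDerivAt_pi.mp hx i).mul (hasDerivAt_pi.mp hy i)
  rw [Finset.sum_add_distrib] at h
  exact h

theorem HasDerivAt.mulVec_const {m n : Type*} [Fintype m] [Fintype n]
    {A : ℝ → Matrix m n ℝ} {A' : Matrix m n ℝ} (hA : HasDerivAt A A' t) (w : n → ℝ) :
    HasDerivAt (fun s => A s *ᵥ w) (A' *ᵥ w) t :=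
  hasDerivAt_pi.mpr fun i =>
    ((hasDerivAt_pi.mp hA i).dotProduct (hasDerivAt_const t w)).congr_deriv (by simp [mulVec])

theorem HasDerivAt.mulVec_of_hat {R : ℝ → Matrix (Fin 3) (Fin 3) ℝ} {Ω : Fin 3 → ℝ}
    (hR : HasDerivAt R (R t * hat Ω) t) (w : Fin 3 → ℝ) :
    HasDerivAt (fun s => R s *ᵥ w) (R t *ᵥ (Ω ⨯₃ w)) t := by
  simpa only [← hat_mulVec, mulVec_mulVec] using hR.mulVec_const w

theorem HasDerivAt.enorm3 {p : ℝ → Fin 3 → ℝ} {v : Fin 3 → ℝ} (hp : HasDerivAt p v t)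
    (hρ : 0 < enorm3 (p t)) :
    HasDerivAt (fun s => enorm3 (p s)) ((enorm3 (p t))⁻¹ • p t ⬝ᵥ v) t := by
  refine ((hp.dotProduct hp).sqrt (Real.sqrt_pos.mp hρ).ne').congr_deriv ?_
  rw [smul_dotProduct, dotProduct_comm v, smul_eq_mul, _root_.enorm3]
  field_simp
  ring

theorem hasDerivAt_mulVec_dotProduct_div_enorm3 {p v Ω : ℝ → Fin 3 → ℝ}
    {R : ℝ → Matrix (Fin 3) (Fin 3) ℝ} {a : Fin 3 → ℝ}
    (hp : HasDerivAt p (v t) t) (hv : HasDerivAt v a t) (hR : HasDerivAt R (R t * hat (Ω t)) t)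
    (hρ : 0 < enorm3 (p t)) (w : Fin 3 → ℝ) :
    HasDerivAt (fun s => (R s *ᵥ w) ⬝ᵥ v s / enorm3 (p s))
      ((((R t *ᵥ (Ω t ⨯₃ w)) ⬝ᵥ v t + (R t *ᵥ w) ⬝ᵥ a) * enorm3 (p t) -
        (R t *ᵥ w) ⬝ᵥ v t * ((enorm3 (p t))⁻¹ • p t ⬝ᵥ v t)) / enorm3 (p t) ^ 2) t :=
  ((hR.mulVec_of_hat w).dotProduct hv).div (hp.enorm3 hρ) hρ.ne'

end CurveCalculus

theorem Set.OrdConnected.eq_mul_exp_of_hasDerivAt {I : Set ℝ} (hI : I.OrdConnected)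
    {k t₀ : ℝ} {μ : ℝ → ℝ} (ht₀ : t₀ ∈ I) (hμ : ∀ t ∈ I, HasDerivAt μ (-(k * μ t)) t)
    {t : ℝ} (ht : t ∈ I) : μ t = μ t₀ * Real.exp (-(k * (t - t₀))) := by
  have hconst : ∀ s ∈ I, HasDerivWithinAt (fun s => μ s * Real.exp (k * s)) 0 I s := by
    intro s hs
    refine (((hμ s hs).mul ((hasDerivAt_id s).const_mul k).exp).congr_deriv ?_).hasDerivWithinAt
    simp only [id, mul_one]
    ring
  have h := (convex_iff_ordConnected.mpr hI).norm_image_sub_le_of_norm_hasDerivWithin_le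
    (C := 0) hconst (fun _ _ => by simp) ht₀ ht
  rw [zero_mul, norm_le_zero_iff, sub_eq_zero] at h
  rw [mul_sub, neg_sub, Real.exp_sub, mul_div_assoc', ← h,
    mul_div_cancel_right₀ _ (Real.exp_ne_zero _)]

section ClosedLoop

variable {m g J₁ J₂ J₃ F : ℝ} {p v Ω : ℝ → Fin 3 → ℝ} {R : ℝ → Matrix (Fin 3) (Fin 3) ℝ}
  {a α τ : Fin 3 → ℝ} {t : ℝ}

theorem hasDerivAt_mu1_of_feedback {k₁ : ℝ} {b : Fin 3 → ℝ} (hm : m ≠ 0)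
    (hv : HasDerivAt v a t) (hvdyn : m • a = F • b - (m * g) • e 2) (hs₃ : e 2 ⬝ᵥ b ≠ 0)
    (hF : F = m * (g - k₁ * mu1 v t) / (e 2 ⬝ᵥ b)) :
    HasDerivAt (mu1 v) (-(k₁ * mu1 v t)) t := by
  refine ((hasDerivAt_const t (e 2)).dotProduct hv).congr_deriv ?_
  rw [zero_dotProduct, zero_add, dotProduct_eq_of_smul_eq_sub hm hvdyn, hF]
  simp only [e_dotProduct] at hs₃ ⊢
  simp only [e, Pi.single_eq_same]
  field_simp
  ring

theorem hasDerivAt_mu2_of_feedback {k₂ : ℝ} (hm : m ≠ 0) (hJ₃ : J₃ ≠ 0)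
    (hSO : (R t)ᵀ * R t = 1) (hρ : 0 < enorm3 (p t))
    (hp : HasDerivAt p (v t) t) (hv : HasDerivAt v a t)
    (hvdyn : m • a = F • (R t *ᵥ e 2) - (m * g) • e 2)
    (hR : HasDerivAt R (R t * hat (Ω t)) t) (hΩ : HasDerivAt Ω α t)
    (hΩdyn : diagonal ![J₁, J₂, J₃] *ᵥ α + Ω t ⨯₃ (diagonal ![J₁, J₂, J₃] *ᵥ Ω t) = τ)
    (hτ : e 2 ⬝ᵥ τ =
      J₃ * (-(k₂ * mu2 R p v Ω t) -
        ((J₁ - J₂) / J₃) * (e 0 ⬝ᵥ Ω t) * (e 1 ⬝ᵥ Ω t) +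
        ((e 0 ⬝ᵥ Ω t) * ((R t *ᵥ e 2) ⬝ᵥ v t) - (e 2 ⬝ᵥ Ω t) * ((R t *ᵥ e 0) ⬝ᵥ v t) -
          g * (e 2 ⬝ᵥ (R t *ᵥ e 1))) / enorm3 (p t) -
        ((R t *ᵥ e 1) ⬝ᵥ v t) * (((enorm3 (p t))⁻¹ • p t) ⬝ᵥ v t) / (enorm3 (p t)) ^ 2)) :
    HasDerivAt (mu2 R p v Ω) (-(k₂ * mu2 R p v Ω t)) t := by
  have hEuler := congr_fun (diagonal_mulVec_add_cross_diagonal_mulVec J₁ J₂ J₃ α (Ω t) ▸ hΩdyn) 2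
  have hα : α 2 = (τ 2 - (J₂ - J₁) * Ω t 0 * Ω t 1) / J₃ := by
    rw [eq_div_iff hJ₃]
    simp only [Fin.isValue, cons_val] at hEuler
    linear_combination hEuler
  have hrot : (R t *ᵥ (Ω t ⨯₃ e 1)) ⬝ᵥ v t =
      Ω t 0 * ((R t *ᵥ e 2) ⬝ᵥ v t) - Ω t 2 * ((R t *ᵥ e 0) ⬝ᵥ v t) := by
    simp [cross_e_one, mulVec_sub, mulVec_smul, sub_dotProduct, smul_dotProduct]
  have hacc : (R t *ᵥ e 1) ⬝ᵥ a = -(g * (e 2 ⬝ᵥ (R t *ᵥ e 1))) := by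
    rw [dotProduct_eq_of_smul_eq_sub hm hvdyn, dotProduct_mulVec_mulVec_of_transpose_mul_self hSO,
      dotProduct_comm _ (e 2)]
    simp [e]
  refine (((hasDerivAt_const t (e 2)).dotProduct hΩ).sub
    (hasDerivAt_mulVec_dotProduct_div_enorm3 hp hv hR hρ (e 1))).congr_deriv ?_
  rw [hrot, hacc]
  simp only [e_dotProduct] at hτ ⊢
  rw [zero_dotProduct, zero_add, hα, hτ]
  simp only [mu2, e_dotProduct]
  field_simp
  ring

theorem hasDerivAt_mu3_of_feedback {k₃ : ℝ} (hm : m ≠ 0) (hJ₂ : J₂ ≠ 0)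
    (hSO : (R t)ᵀ * R t = 1) (hρ : 0 < enorm3 (p t))
    (hp : HasDerivAt p (v t) t) (hv : HasDerivAt v a t)
    (hvdyn : m • a = F • (R t *ᵥ e 2) - (m * g) • e 2)
    (hR : HasDerivAt R (R t * hat (Ω t)) t) (hΩ : HasDerivAt Ω α t)
    (hΩdyn : diagonal ![J₁, J₂, J₃] *ᵥ α + Ω t ⨯₃ (diagonal ![J₁, J₂, J₃] *ᵥ Ω t) = τ)
    (hτ : e 1 ⬝ᵥ τ =
      J₂ * (-(k₃ * mu3 R p v Ω t) -
        ((J₃ - J₁) / J₂) * (e 2 ⬝ᵥ Ω t) * (e 0 ⬝ᵥ Ω t) -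
        ((e 1 ⬝ᵥ Ω t) * ((R t *ᵥ e 0) ⬝ᵥ v t) - (e 0 ⬝ᵥ Ω t) * ((R t *ᵥ e 1) ⬝ᵥ v t) +
          F / m - g * (e 2 ⬝ᵥ (R t *ᵥ e 2))) / enorm3 (p t) +
        ((R t *ᵥ e 2) ⬝ᵥ v t) * (((enorm3 (p t))⁻¹ • p t) ⬝ᵥ v t) / (enorm3 (p t)) ^ 2)) :
    HasDerivAt (mu3 R p v Ω) (-(k₃ * mu3 R p v Ω t)) t := by
  have hEuler := congr_fun (diagonal_mulVec_add_cross_diagonal_mulVec J₁ J₂ J₃ α (Ω t) ▸ hΩdyn) 1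
  have hα : α 1 = (τ 1 - (J₁ - J₃) * Ω t 2 * Ω t 0) / J₂ := by
    rw [eq_div_iff hJ₂]
    simp only [Fin.isValue, cons_val] at hEuler
    linear_combination hEuler
  have hrot : (R t *ᵥ (Ω t ⨯₃ e 2)) ⬝ᵥ v t =
      Ω t 1 * ((R t *ᵥ e 0) ⬝ᵥ v t) - Ω t 0 * ((R t *ᵥ e 1) ⬝ᵥ v t) := by
    simp [cross_e_two, mulVec_sub, mulVec_smul, sub_dotProduct, smul_dotProduct]
  have hacc : (R t *ᵥ e 2) ⬝ᵥ a = F / m - g * (e 2 ⬝ᵥ (R t *ᵥ e 2)) := by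
    rw [dotProduct_eq_of_smul_eq_sub hm hvdyn, dotProduct_mulVec_mulVec_of_transpose_mul_self hSO,
      dotProduct_comm _ (e 2)]
    simp [e]
  refine (((hasDerivAt_const t (e 1)).dotProduct hΩ).add
    (hasDerivAt_mulVec_dotProduct_div_enorm3 hp hv hR hρ (e 2))).congr_deriv ?_
  rw [hrot, hacc]
  simp only [e_dotProduct] at hτ ⊢
  rw [zero_dotProduct, zero_add, hα, hτ]
  simp only [mu3, e_dotProduct]
  field_simp
  ring

end ClosedLoop

theorem residual_stabilization_general (m g J₁ J₂ J₃ k₁ k₂ k₃ : ℝ)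
    (hm : 0 < m) (hJ₂ : 0 < J₂) (hJ₃ : 0 < J₃)
    (I : Set ℝ) (hI : I.OrdConnected) (h0 : (0 : ℝ) ∈ I)
    (p v v' Ω Ω' τ : ℝ → Fin 3 → ℝ) (R : ℝ → Matrix (Fin 3) (Fin 3) ℝ) (f : ℝ → ℝ)
    (hSO : ∀ t ∈ I, SO3 (R t))
    (hρpos : ∀ t ∈ I, 0 < enorm3 (p t))
    (hs3 : ∀ t ∈ I, e 2 ⬝ᵥ (R t *ᵥ e 2) ≠ 0)
    -- translational dynamics
    (hp : ∀ t ∈ I, HasDerivAt p (v t) t)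
    (hv : ∀ t ∈ I, HasDerivAt v (v' t) t)
    (hvdyn : ∀ t ∈ I, m • v' t = f t • (R t *ᵥ e 2) - (m * g) • e 2)
    -- rotational dynamics
    (hR : ∀ t ∈ I, HasDerivAt R (R t * hat (Ω t)) t)
    (hΩ : ∀ t ∈ I, HasDerivAt Ω (Ω' t) t)
    (hΩdyn : ∀ t ∈ I,
      (Matrix.diagonal ![J₁, J₂, J₃]) *ᵥ Ω' t +
        crossProduct (Ω t) ((Matrix.diagonal ![J₁, J₂, J₃]) *ᵥ Ω t) = τ t)
    -- stabilizing feedback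
    (hf : ∀ t ∈ I, f t = m * (g - k₁ * mu1 v t) / (e 2 ⬝ᵥ (R t *ᵥ e 2)))
    (hτ2 : ∀ t ∈ I, e 1 ⬝ᵥ τ t =
      J₂ * (-(k₃ * mu3 R p v Ω t) -
        ((J₃ - J₁) / J₂) * (e 2 ⬝ᵥ Ω t) * (e 0 ⬝ᵥ Ω t) -
        ((e 1 ⬝ᵥ Ω t) * ((R t *ᵥ e 0) ⬝ᵥ v t) - (e 0 ⬝ᵥ Ω t) * ((R t *ᵥ e 1) ⬝ᵥ v t) +
          f t / m - g * (e 2 ⬝ᵥ (R t *ᵥ e 2))) / enorm3 (p t) +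
        ((R t *ᵥ e 2) ⬝ᵥ v t) * (((enorm3 (p t))⁻¹ • p t) ⬝ᵥ v t) / (enorm3 (p t)) ^ 2))
    (hτ3 : ∀ t ∈ I, e 2 ⬝ᵥ τ t =
      J₃ * (-(k₂ * mu2 R p v Ω t) -
        ((J₁ - J₂) / J₃) * (e 0 ⬝ᵥ Ω t) * (e 1 ⬝ᵥ Ω t) +
        ((e 0 ⬝ᵥ Ω t) * ((R t *ᵥ e 2) ⬝ᵥ v t) - (e 2 ⬝ᵥ Ω t) * ((R t *ᵥ e 0) ⬝ᵥ v t) -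
          g * (e 2 ⬝ᵥ (R t *ᵥ e 1))) / enorm3 (p t) -
        ((R t *ᵥ e 1) ⬝ᵥ v t) * (((enorm3 (p t))⁻¹ • p t) ⬝ᵥ v t) / (enorm3 (p t)) ^ 2)) :
    ∀ t ∈ I,
      (HasDerivAt (mu1 v) (-(k₁ * mu1 v t)) t ∧
        HasDerivAt (mu2 R p v Ω) (-(k₂ * mu2 R p v Ω t)) t ∧
        HasDerivAt (mu3 R p v Ω) (-(k₃ * mu3 R p v Ω t)) t) ∧
      (mu1 v t = mu1 v 0 * Real.exp (-(k₁ * t)) ∧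
        mu2 R p v Ω t = mu2 R p v Ω 0 * Real.exp (-(k₂ * t)) ∧
        mu3 R p v Ω t = mu3 R p v Ω 0 * Real.exp (-(k₃ * t))) := by
  have hderiv : ∀ t ∈ I, HasDerivAt (mu1 v) (-(k₁ * mu1 v t)) t ∧
      HasDerivAt (mu2 R p v Ω) (-(k₂ * mu2 R p v Ω t)) t ∧
      HasDerivAt (mu3 R p v Ω) (-(k₃ * mu3 R p v Ω t)) t := fun t ht =>
    ⟨hasDerivAt_mu1_of_feedback hm.ne' (hv t ht) (hvdyn t ht) (hs3 t ht) (hf t ht),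
      hasDerivAt_mu2_of_feedback hm.ne' hJ₃.ne' (hSO t ht).1 (hρpos t ht) (hp t ht) (hv t ht)
        (hvdyn t ht) (hR t ht) (hΩ t ht) (hΩdyn t ht) (hτ3 t ht),
      hasDerivAt_mu3_of_feedback hm.ne' hJ₂.ne' (hSO t ht).1 (hρpos t ht) (hp t ht) (hv t ht)
        (hvdyn t ht) (hR t ht) (hΩ t ht) (hΩdyn t ht) (hτ2 t ht)⟩
  intro t ht
  have decay {μ : ℝ → ℝ} {k : ℝ} (hμ : ∀ s ∈ I, HasDerivAt μ (-(k * μ s)) s) :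
      μ t = μ 0 * Real.exp (-(k * t)) := by
    simpa using hI.eq_mul_exp_of_hasDerivAt h0 hμ ht
  exact ⟨hderiv t ht, decay fun s hs => (hderiv s hs).1, decay fun s hs => (hderiv s hs).2.1,
    decay fun s hs => (hderiv s hs).2.2⟩

/-- Residual stabilization: under the closed-loop dynamics with the stabilizing feedback
(`τ₁ = 0`, `f = m(g − k₁μ₁)/s₃` and the given `τ₂, τ₃`), the residuals satisfy
`μ̇ᵢ = −kᵢ μᵢ` on `I` and hence `μᵢ(t) = μᵢ(0) e^{−kᵢ t}` for all `t ∈ I`. -/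
theorem residual_stabilization (m g J₁ J₂ J₃ k₁ k₂ k₃ : ℝ)
    (hm : 0 < m) (hg : 0 < g) (hJ₁ : 0 < J₁) (hJ₂ : 0 < J₂) (hJ₃ : 0 < J₃)
    (hk₁ : 0 < k₁) (hk₂ : 0 < k₂) (hk₃ : 0 < k₃)
    (I : Set ℝ) (hI : I.OrdConnected) (h0 : (0 : ℝ) ∈ I)
    (p v v' Ω Ω' τ : ℝ → Fin 3 → ℝ) (R : ℝ → Matrix (Fin 3) (Fin 3) ℝ) (f : ℝ → ℝ)
    (hSO : ∀ t ∈ I, SO3 (R t))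
    (hρpos : ∀ t ∈ I, 0 < enorm3 (p t))
    (hs3 : ∀ t ∈ I, e 2 ⬝ᵥ (R t *ᵥ e 2) ≠ 0)
    -- translational dynamics
    (hp : ∀ t ∈ I, HasDerivAt p (v t) t)
    (hv : ∀ t ∈ I, HasDerivAt v (v' t) t)
    (hvdyn : ∀ t ∈ I, m • v' t = f t • (R t *ᵥ e 2) - (m * g) • e 2)
    -- rotational dynamics
    (hR : ∀ t ∈ I, HasDerivAt R (R t * hat (Ω t)) t)
    (hΩ : ∀ t ∈ I, HasDerivAt Ω (Ω' t) t)
    (hΩdyn : ∀ t ∈ I,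
      (Matrix.diagonal ![J₁, J₂, J₃]) *ᵥ Ω' t +
        crossProduct (Ω t) ((Matrix.diagonal ![J₁, J₂, J₃]) *ᵥ Ω t) = τ t)
    -- stabilizing feedback
    (hf : ∀ t ∈ I, f t = m * (g - k₁ * mu1 v t) / (e 2 ⬝ᵥ (R t *ᵥ e 2)))
    (hτ1 : ∀ t ∈ I, e 0 ⬝ᵥ τ t = 0)
    (hτ2 : ∀ t ∈ I, e 1 ⬝ᵥ τ t =
      J₂ * (-(k₃ * mu3 R p v Ω t) -
        ((J₃ - J₁) / J₂) * (e 2 ⬝ᵥ Ω t) * (e 0 ⬝ᵥ Ω t) -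
        ((e 1 ⬝ᵥ Ω t) * ((R t *ᵥ e 0) ⬝ᵥ v t) - (e 0 ⬝ᵥ Ω t) * ((R t *ᵥ e 1) ⬝ᵥ v t) +
          f t / m - g * (e 2 ⬝ᵥ (R t *ᵥ e 2))) / enorm3 (p t) +
        ((R t *ᵥ e 2) ⬝ᵥ v t) * (((enorm3 (p t))⁻¹ • p t) ⬝ᵥ v t) / (enorm3 (p t)) ^ 2))
    (hτ3 : ∀ t ∈ I, e 2 ⬝ᵥ τ t =
      J₃ * (-(k₂ * mu2 R p v Ω t) -
        ((J₁ - J₂) / J₃) * (e 0 ⬝ᵥ Ω t) * (e 1 ⬝ᵥ Ω t) +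
        ((e 0 ⬝ᵥ Ω t) * ((R t *ᵥ e 2) ⬝ᵥ v t) - (e 2 ⬝ᵥ Ω t) * ((R t *ᵥ e 0) ⬝ᵥ v t) -
          g * (e 2 ⬝ᵥ (R t *ᵥ e 1))) / enorm3 (p t) -
        ((R t *ᵥ e 1) ⬝ᵥ v t) * (((enorm3 (p t))⁻¹ • p t) ⬝ᵥ v t) / (enorm3 (p t)) ^ 2)) :
    ∀ t ∈ I,
      (HasDerivAt (mu1 v) (-(k₁ * mu1 v t)) t ∧
        HasDerivAt (mu2 R p v Ω) (-(k₂ * mu2 R p v Ω t)) t ∧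
        HasDerivAt (mu3 R p v Ω) (-(k₃ * mu3 R p v Ω t)) t) ∧
      (mu1 v t = mu1 v 0 * Real.exp (-(k₁ * t)) ∧
        mu2 R p v Ω t = mu2 R p v Ω 0 * Real.exp (-(k₂ * t)) ∧
        mu3 R p v Ω t = mu3 R p v Ω 0 * Real.exp (-(k₃ * t))) :=
  residual_stabilization_general m g J₁ J₂ J₃ k₁ k₂ k₃ hm hJ₂ hJ₃ I hI h0 p v v' Ω Ω' τ R f hSO
    hρpos hs3 hp hv hvdyn hR hΩ hΩdyn hf hτ2 hτ3
end
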